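/- Let m ∈ (1/2)ℕ_odd and p ∈ ℤ with 0 ≤ p ≤ 2m; let τ lie in the upper half-plane and let z ∈ ℂ be generic. Then: (1)(i) Ξ^{(1)[m,p]}(τ+1, z) = e^{πi(2p+1)²/(4(2m+1)) − πi/4} Ξ^{(2)[m,p]}(τ, z); (ii) Ξ^{(2)[m,p]}(τ+1, z) = −e^{πi(2p+1)²/(4(2m+1)) − πi/4} Ξ^{(1)[m,p]}(τ, z); (iii) Ξ^{(3)[m,p]}(τ+1, z) = e^{πip²/(2m+1)} Ξ^{(3)[m,p]}(τ, z); (2) the same three identities hold with Ξ^{(i)[m,p]} replaced by Υ^{(i)[m,p]} throughout. -/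

import Mathlib

noncomputable section

open scoped BigOperators

namespace Mock

/-- `e x = exp(2πix)` -/
def e (x : ℂ) : ℂ := Complex.exp (2 * (Real.pi : ℂ) * Complex.I * x)

/-- `qpow τ a = q^a = exp(2πiaτ)` for a real exponent `a` -/
def qpow (τ : ℂ) (a : ℝ) : ℂ := Complex.exp (2 * (Real.pi : ℂ) * Complex.I * (a : ℂ) * τ)

/-- Jacobi theta function `θ^{(ε)}_{k,m}(τ,z)` -/
def theta (ε : ℂ) (k m : ℝ) (τ z : ℂ) : ℂ :=
  ∑' j : ℤ, ε ^ j * e ((m : ℂ) * ((j : ℂ) + (k : ℂ) / (2 * (m : ℂ))) * z)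
      * qpow τ (m * ((j : ℝ) + k / (2 * m)) ^ 2)

/-- `Φ^{(ε)[m,s]}_1` -/
def Phi1 (ε : ℂ) (m s : ℝ) (τ z₁ z₂ t : ℂ) : ℂ :=
  e (-(m : ℂ) * t) * ∑' j : ℤ,
    ε ^ j * e ((m : ℂ) * (j : ℂ) * (z₁ + z₂) + (s : ℂ) * z₁)
      * qpow τ (m * (j : ℝ) ^ 2 + s * (j : ℝ)) / (1 - e z₁ * qpow τ (j : ℝ))

/-- `Φ^{(ε)[m,s]}_2` -/
def Phi2 (ε : ℂ) (m s : ℝ) (τ z₁ z₂ t : ℂ) : ℂ :=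
  e (-(m : ℂ) * t) * ∑' j : ℤ,
    ε ^ j * e (-(m : ℂ) * (j : ℂ) * (z₁ + z₂) - (s : ℂ) * z₂)
      * qpow τ (m * (j : ℝ) ^ 2 + s * (j : ℝ)) / (1 - e (-z₂) * qpow τ (j : ℝ))

/-- `Φ^{(ε)[m,s]} = Φ₁ - Φ₂` -/
def Phi (ε : ℂ) (m s : ℝ) (τ z₁ z₂ t : ℂ) : ℂ :=
  Phi1 ε m s τ z₁ z₂ t - Phi2 ε m s τ z₁ z₂ t

/-- `E(x) = 2∫₀ˣ e^{−πt²} dt` -/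
def Efun (x : ℝ) : ℝ := 2 * ∫ t in (0:ℝ)..x, Real.exp (-Real.pi * t ^ 2)

/-- `P^{(ε)}_{j,m}(τ,w)` -/
def Pfun (ε : ℂ) (j m : ℝ) (τ w : ℂ) : ℂ :=
  ∑' k : ℤ, ε ^ k *
    (Efun ((j + 2 * m * (k : ℝ) - 2 * m * (w.im / τ.im)) * Real.sqrt (τ.im / m)) : ℂ) *
    Complex.exp (-(Real.pi : ℂ) * Complex.I * τ * ((j : ℂ) + 2 * (m : ℂ) * (k : ℂ)) ^ 2 / (2 * (m : ℂ))
      + 2 * (Real.pi : ℂ) * Complex.I * ((j : ℂ) + 2 * (m : ℂ) * (k : ℂ)) * w)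

/-- `Q^{(ε)}_{j,m}(τ,w)` -/
def Qfun (ε : ℂ) (j m : ℝ) (τ w : ℂ) : ℂ :=
  ∑' k : ℤ, ε ^ k * (if 0 ≤ k then (1 : ℂ) else -1) *
    Complex.exp (-(Real.pi : ℂ) * Complex.I * τ * ((j : ℂ) + 2 * (m : ℂ) * (k : ℂ)) ^ 2 / (2 * (m : ℂ))
      + 2 * (Real.pi : ℂ) * Complex.I * ((j : ℂ) + 2 * (m : ℂ) * (k : ℂ)) * w)

/-- `R^{(ε)}_{j,m}(τ,w)`, the sum over `n = j + 2mk`, `k ∈ ℤ` -/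
def Rfun (ε : ℂ) (j m : ℝ) (τ w : ℂ) : ℂ :=
  ∑' k : ℤ, ε ^ k *
    ((Real.sign (2 * m * (k : ℝ) + 2 * m - 1 / 2) : ℂ)
      - (Efun ((j + 2 * m * (k : ℝ) - 2 * m * (w.im / τ.im)) * Real.sqrt (τ.im / m)) : ℂ)) *
    Complex.exp (-(Real.pi : ℂ) * Complex.I * τ * ((j : ℂ) + 2 * (m : ℂ) * (k : ℂ)) ^ 2 / (2 * (m : ℂ))
      + 2 * (Real.pi : ℂ) * Complex.I * ((j : ℂ) + 2 * (m : ℂ) * (k : ℂ)) * w)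

/-- correction term `Φ^{(ε)[m,s]}_{add}`; the finite sum over `k ∈ s+ℤ`, `s ≤ k < s+2m`
is parametrized by `k = s + n`, `0 ≤ n < 2m`. -/
def PhiAdd (ε : ℂ) (m s : ℝ) (τ z₁ z₂ t : ℂ) : ℂ :=
  -(1/2) * e (-(m : ℂ) * t) *
    ∑' n : ℤ, if 0 ≤ n ∧ (n : ℝ) < 2 * m then
      Rfun ε (s + (n : ℝ)) m τ ((z₁ - z₂) / 2) *
        (theta ε (s + (n : ℝ)) m τ (z₁ + z₂) - theta ε (-(s + (n : ℝ))) m τ (z₁ + z₂))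
    else 0

/-- Zwegers modification `Φ̃^{(ε)[m,s]}` -/
def PhiTilde (ε : ℂ) (m s : ℝ) (τ z₁ z₂ t : ℂ) : ℂ :=
  Phi ε m s τ z₁ z₂ t + PhiAdd ε m s τ z₁ z₂ t

/-- Dedekind eta function -/
def eta (τ : ℂ) : ℂ := qpow τ (1/24) * ∏' n : ℕ, (1 - qpow τ ((n : ℝ) + 1))

/-- Mumford theta `ϑ₁₁(τ,z) = i θ^{(−)}_{1/2,1/2}(τ,2z)` -/
def vtheta11 (τ z : ℂ) : ℂ := Complex.I * theta (-1) (1/2) (1/2) τ (2 * z)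

/-- Mumford theta `ϑ₁₀(τ,z) = θ^{(+)}_{1/2,1/2}(τ,2z)` -/
def vtheta10 (τ z : ℂ) : ℂ := theta 1 (1/2) (1/2) τ (2 * z)

/-- the half-odd integer `(2n+1)/2` -/
def hodd (n : ℕ) : ℝ := (2 * (n : ℝ) + 1) / 2

def psi1 (m : ℝ) (τ z : ℂ) : ℂ :=
  PhiTilde (-1) m (1/2) τ (z/2 + τ/2 - 1/2) (z/2 - τ/2 + 1/2) 0
def psi2 (m : ℝ) (τ z : ℂ) : ℂ :=
  PhiTilde (-1) m (1/2) τ (z/2 + τ/2) (z/2 - τ/2) 0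
def psi3 (m : ℝ) (τ z : ℂ) : ℂ :=
  PhiTilde (-1) m (1/2) τ (z/2 - 1/2) (z/2 + 1/2) 0

def Xi1 (m : ℝ) (p : ℤ) (τ z : ℂ) : ℂ :=
  qpow τ (-m/4) * theta (-1) ((2 * (p : ℝ) + 1) * m) (m + 1/2) τ 0 * psi1 m τ z
def Xi2 (m : ℝ) (p : ℤ) (τ z : ℂ) : ℂ :=
  qpow τ (-m/4) * theta 1 ((2 * (p : ℝ) + 1) * m) (m + 1/2) τ 0 * psi2 m τ z
def Xi3 (m : ℝ) (p : ℤ) (τ z : ℂ) : ℂ :=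
  theta (-1) (2 * (p : ℝ) * m) (m + 1/2) τ 0 * psi3 m τ z

def Ups1 (m : ℝ) (p : ℤ) (τ z : ℂ) : ℂ :=
  -Complex.I * eta τ ^ 3 *
    (theta (-1) ((p : ℝ) + 1/2) (m + 1/2) τ z - theta (-1) (-((p : ℝ) + 1/2)) (m + 1/2) τ z) /
    theta 1 0 (1/2) τ z
def Ups2 (m : ℝ) (p : ℤ) (τ z : ℂ) : ℂ :=
  eta τ ^ 3 *
    (theta 1 ((p : ℝ) + 1/2) (m + 1/2) τ z - theta 1 (-((p : ℝ) + 1/2)) (m + 1/2) τ z) /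
    theta (-1) 0 (1/2) τ z
def Ups3 (m : ℝ) (p : ℤ) (τ z : ℂ) : ℂ :=
  -Complex.I * eta τ ^ 3 *
    (theta (-1) (p : ℝ) (m + 1/2) τ z - theta (-1) (-(p : ℝ)) (m + 1/2) τ z) /
    theta 1 (1/2) (1/2) τ z

def G1 (m : ℝ) (p : ℤ) (τ z : ℂ) : ℂ := Xi1 m p τ z - Ups1 m p τ z
def G2 (m : ℝ) (p : ℤ) (τ z : ℂ) : ℂ := Xi2 m p τ z - Ups2 m p τ z
def G3 (m : ℝ) (p : ℤ) (τ z : ℂ) : ℂ := Xi3 m p τ z - Ups3 m p τ z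

/-- `ω^{[m]}_{j,k}(z₁,z₂,z₃)` -/
def omega (m : ℝ) (j k : ℕ) (z₁ z₂ z₃ : ℂ) : ℂ :=
  e ((j : ℂ) * (z₁ - z₂)) * e ((2 * (m : ℂ) * (j : ℂ) - (k : ℂ)) * (z₁ - 2 * z₂ - z₃) / 2)
  + e (-(j : ℂ) * (z₁ - z₂)) * e (-(2 * (m : ℂ) * (j : ℂ) - (k : ℂ)) * (z₁ - 2 * z₂ - z₃) / 2)
  - e ((j : ℂ) * (z₁ - z₂)) * e ((2 * (m : ℂ) * (j : ℂ) - (k : ℂ)) * (z₁ + z₃) / 2)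
  - e (-(j : ℂ) * (z₁ - z₂)) * e (-(2 * (m : ℂ) * (j : ℂ) - (k : ℂ)) * (z₁ + z₃) / 2)

/-- indefinite modular form `g^{(1)[m,p]}_k(τ)` (with the convention of the paper,
split according to `k = m` or `k < m`). -/
def g1 (m : ℝ) (p : ℤ) (k : ℝ) (τ : ℂ) : ℂ :=
  if k = m then
    ((∑' x : ℤ × ℤ, if 0 < x.2 ∧ x.2 ≤ x.1 then
        (-1 : ℂ) ^ x.1 * e ((m : ℂ) / 2) *
          qpow τ ((m + 1/2) * ((x.1 : ℝ) + m * (2 * (p : ℝ) + 1) / (2 * m + 1)) ^ 2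
            - m * ((x.2 : ℝ) + (p : ℝ)) ^ 2) else 0)
      - (∑' x : ℤ × ℤ, if x.1 < x.2 ∧ x.2 ≤ 0 then
        (-1 : ℂ) ^ x.1 * e ((m : ℂ) / 2) *
          qpow τ ((m + 1/2) * ((x.1 : ℝ) + m * (2 * (p : ℝ) + 1) / (2 * m + 1)) ^ 2
            - m * ((x.2 : ℝ) + (p : ℝ)) ^ 2) else 0))
    + (1/2) * e ((m : ℂ) / 2) * theta (-1) ((2 * (p : ℝ) + 1) * m) (m + 1/2) τ 0 *
        ∑ r ∈ Finset.Icc (-p) p, qpow τ (-m * (r : ℝ) ^ 2)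
  else
    ((∑' x : ℤ × ℤ, if 0 ≤ x.2 ∧ x.2 < x.1 then
        (-1 : ℂ) ^ x.1 * e ((k : ℂ) / 2) *
          qpow τ ((m + 1/2) * ((x.1 : ℝ) + m * (2 * (p : ℝ) + 1) / (2 * m + 1)) ^ 2
            - m * ((x.2 : ℝ) + (p : ℝ) + (m + k) / (2 * m)) ^ 2) else 0)
      - (∑' x : ℤ × ℤ, if x.1 ≤ x.2 ∧ x.2 < 0 then
        (-1 : ℂ) ^ x.1 * e ((k : ℂ) / 2) *
          qpow τ ((m + 1/2) * ((x.1 : ℝ) + m * (2 * (p : ℝ) + 1) / (2 * m + 1)) ^ 2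
            - m * ((x.2 : ℝ) + (p : ℝ) + (m + k) / (2 * m)) ^ 2) else 0))
    + ((∑' x : ℤ × ℤ, if 0 ≤ x.2 ∧ x.2 ≤ x.1 then
        (-1 : ℂ) ^ x.1 * e ((k : ℂ) / 2) *
          qpow τ ((m + 1/2) * ((x.1 : ℝ) + m * (2 * (p : ℝ) + 1) / (2 * m + 1)) ^ 2
            - m * ((x.2 : ℝ) + (p : ℝ) + (m - k) / (2 * m)) ^ 2) else 0)
      - (∑' x : ℤ × ℤ, if x.1 < x.2 ∧ x.2 < 0 then
        (-1 : ℂ) ^ x.1 * e ((k : ℂ) / 2) *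
          qpow τ ((m + 1/2) * ((x.1 : ℝ) + m * (2 * (p : ℝ) + 1) / (2 * m + 1)) ^ 2
            - m * ((x.2 : ℝ) + (p : ℝ) + (m - k) / (2 * m)) ^ 2) else 0))
    + e ((k : ℂ) / 2) * theta (-1) ((2 * (p : ℝ) + 1) * m) (m + 1/2) τ 0 *
        ∑ r ∈ Finset.Icc (-p + 1) p, qpow τ (-m * ((r : ℝ) + (k - m) / (2 * m)) ^ 2)

/-- indefinite modular form `g^{(2)[m,p]}_k(τ)` -/
def g2 (m : ℝ) (p : ℤ) (k : ℝ) (τ : ℂ) : ℂ :=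
  if k = m then
    -(-1 : ℂ) ^ p *
      ((∑' x : ℤ × ℤ, if 0 < x.2 ∧ x.2 ≤ x.1 then
          (-1 : ℂ) ^ x.2 *
            qpow τ ((m + 1/2) * ((x.1 : ℝ) + m * (2 * (p : ℝ) + 1) / (2 * m + 1)) ^ 2
              - m * ((x.2 : ℝ) + (p : ℝ)) ^ 2) else 0)
        - (∑' x : ℤ × ℤ, if x.1 < x.2 ∧ x.2 ≤ 0 then
          (-1 : ℂ) ^ x.2 *
            qpow τ ((m + 1/2) * ((x.1 : ℝ) + m * (2 * (p : ℝ) + 1) / (2 * m + 1)) ^ 2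
              - m * ((x.2 : ℝ) + (p : ℝ)) ^ 2) else 0))
    - (1/2) * theta 1 ((2 * (p : ℝ) + 1) * m) (m + 1/2) τ 0 *
        ∑ r ∈ Finset.Icc (-p) p, (-1 : ℂ) ^ r * qpow τ (-m * (r : ℝ) ^ 2)
  else
    (-1 : ℂ) ^ p *
      ((∑' x : ℤ × ℤ, if 0 ≤ x.2 ∧ x.2 < x.1 then
          (-1 : ℂ) ^ x.2 *
            qpow τ ((m + 1/2) * ((x.1 : ℝ) + m * (2 * (p : ℝ) + 1) / (2 * m + 1)) ^ 2
              - m * ((x.2 : ℝ) + (p : ℝ) + (m + k) / (2 * m)) ^ 2) else 0)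
        - (∑' x : ℤ × ℤ, if x.1 ≤ x.2 ∧ x.2 < 0 then
          (-1 : ℂ) ^ x.2 *
            qpow τ ((m + 1/2) * ((x.1 : ℝ) + m * (2 * (p : ℝ) + 1) / (2 * m + 1)) ^ 2
              - m * ((x.2 : ℝ) + (p : ℝ) + (m + k) / (2 * m)) ^ 2) else 0))
    - (-1 : ℂ) ^ p *
      ((∑' x : ℤ × ℤ, if 0 ≤ x.2 ∧ x.2 ≤ x.1 then
          (-1 : ℂ) ^ x.2 *
            qpow τ ((m + 1/2) * ((x.1 : ℝ) + m * (2 * (p : ℝ) + 1) / (2 * m + 1)) ^ 2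
              - m * ((x.2 : ℝ) + (p : ℝ) + (m - k) / (2 * m)) ^ 2) else 0)
        - (∑' x : ℤ × ℤ, if x.1 < x.2 ∧ x.2 < 0 then
          (-1 : ℂ) ^ x.2 *
            qpow τ ((m + 1/2) * ((x.1 : ℝ) + m * (2 * (p : ℝ) + 1) / (2 * m + 1)) ^ 2
              - m * ((x.2 : ℝ) + (p : ℝ) + (m - k) / (2 * m)) ^ 2) else 0))
    - theta 1 ((2 * (p : ℝ) + 1) * m) (m + 1/2) τ 0 *
        ∑ r ∈ Finset.Icc (-p + 1) p, (-1 : ℂ) ^ r *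
          qpow τ (-m * ((r : ℝ) + (k - m) / (2 * m)) ^ 2)

/-- indefinite modular form `g^{(3)[m,p]}_k(τ)` -/
def g3 (m : ℝ) (p : ℤ) (k : ℝ) (τ : ℂ) : ℂ :=
  if k = m then
    e ((m : ℂ) / 2) *
      ((∑' x : ℤ × ℤ, if 0 < x.2 ∧ x.2 ≤ x.1 then
          (-1 : ℂ) ^ x.1 *
            qpow τ ((m + 1/2) * ((x.1 : ℝ) + 2 * m * (p : ℝ) / (2 * m + 1)) ^ 2
              - m * ((x.2 : ℝ) - 1/2 + (p : ℝ)) ^ 2) else 0)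
        - (∑' x : ℤ × ℤ, if x.1 < x.2 ∧ x.2 ≤ 0 then
          (-1 : ℂ) ^ x.1 *
            qpow τ ((m + 1/2) * ((x.1 : ℝ) + 2 * m * (p : ℝ) / (2 * m + 1)) ^ 2
              - m * ((x.2 : ℝ) - 1/2 + (p : ℝ)) ^ 2) else 0))
    + e ((m : ℂ) / 2) * theta (-1) (2 * (p : ℝ) * m) (m + 1/2) τ 0 *
        ∑ r ∈ Finset.Icc 1 p, qpow τ (-m * (2 * (r : ℝ) - 1) ^ 2 / 4)
  else
    ((∑' x : ℤ × ℤ, if 0 ≤ x.2 ∧ x.2 < x.1 then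
        (-1 : ℂ) ^ x.1 * e ((k : ℂ) / 2) *
          qpow τ ((m + 1/2) * ((x.1 : ℝ) + 2 * m * (p : ℝ) / (2 * m + 1)) ^ 2
            - m * ((x.2 : ℝ) + (p : ℝ) + k / (2 * m)) ^ 2) else 0)
      - (∑' x : ℤ × ℤ, if x.1 ≤ x.2 ∧ x.2 < 0 then
        (-1 : ℂ) ^ x.1 * e ((k : ℂ) / 2) *
          qpow τ ((m + 1/2) * ((x.1 : ℝ) + 2 * m * (p : ℝ) / (2 * m + 1)) ^ 2
            - m * ((x.2 : ℝ) + (p : ℝ) + k / (2 * m)) ^ 2) else 0))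
    + ((∑' x : ℤ × ℤ, if 0 ≤ x.2 ∧ x.2 ≤ x.1 then
        (-1 : ℂ) ^ x.1 * e ((k : ℂ) / 2) *
          qpow τ ((m + 1/2) * ((x.1 : ℝ) + 2 * m * (p : ℝ) / (2 * m + 1)) ^ 2
            - m * ((x.2 : ℝ) + (p : ℝ) - k / (2 * m)) ^ 2) else 0)
      - (∑' x : ℤ × ℤ, if x.1 < x.2 ∧ x.2 < 0 then
        (-1 : ℂ) ^ x.1 * e ((k : ℂ) / 2) *
          qpow τ ((m + 1/2) * ((x.1 : ℝ) + 2 * m * (p : ℝ) / (2 * m + 1)) ^ 2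
            - m * ((x.2 : ℝ) + (p : ℝ) - k / (2 * m)) ^ 2) else 0))
    + e ((k : ℂ) / 2) * theta (-1) (2 * (p : ℝ) * m) (m + 1/2) τ 0 *
        ∑ r ∈ Finset.Icc (-p + 1) (p - 1), qpow τ (-(2 * m * (r : ℝ) + k) ^ 2 / (4 * m))

/-!
Under `τ ↦ τ + 1` a power `q^a` picks up the phase `e(a)`. For `m ∈ ½ℕ_odd` the index
`M = m + 1/2` of the theta functions is an integer, so `q^{M (j + k/2M)²}` picks up
`e(k²/4M) · e(M + k)^j`: the theta function gets the constant `e(k²/4M)` and its sign character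
flips exactly when `M + k` is a half-integer. The exponents `m j² + j/2` of `Φ^{(−)[m,1/2]}` are
integers, and in the Zwegers correction the phase `e(-k²/4m)` of `R_{k,m}` cancels that of
`θ_{±k,m}`, so `Φ̃^{(−)[m,1/2]}` is invariant, while `(z₁, z₂) ↦ (z₁ + 1, z₂ - 1)` multiplies it
by `e(1/2) = -1`; hence `ψ̃^{(1)}` and `ψ̃^{(2)}` are exchanged, one with a sign. Together with
`η(τ + 1)³ = e(1/8) η(τ)³`, the stated constants are these phases reduced modulo integers.
-/

lemma e_add (x y : ℂ) : e (x + y) = e x * e y := by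
  rw [e, e, e, ← Complex.exp_add]; ring_nf

lemma e_ne_zero (x : ℂ) : e x ≠ 0 := Complex.exp_ne_zero _

lemma e_neg (x : ℂ) : e (-x) = (e x)⁻¹ := by
  rw [e, e, ← Complex.exp_neg]; ring_nf

lemma e_intCast_mul (n : ℤ) (x : ℂ) : e (n * x) = e x ^ n := by
  rw [e, e, ← Complex.exp_int_mul]; ring_nf

lemma e_intCast (n : ℤ) : e n = 1 := by
  rw [e, show 2 * (Real.pi : ℂ) * Complex.I * n = n * (2 * Real.pi * Complex.I) by ring]
  exact Complex.exp_int_mul_two_pi_mul_I n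

lemma e_zero : e 0 = 1 := by simpa using e_intCast 0

lemma e_one : e 1 = 1 := by simpa using e_intCast 1

lemma e_half : e (1 / 2) = -1 := by
  rw [e, show 2 * (Real.pi : ℂ) * Complex.I * (1 / 2) = Real.pi * Complex.I by ring,
    Complex.exp_pi_mul_I]

lemma e_quarter : e (1 / 4) = Complex.I := by
  rw [e, show 2 * (Real.pi : ℂ) * Complex.I * (1 / 4) = (Real.pi / 2 : ℝ) * Complex.I by
    push_cast; ring, Complex.exp_mul_I]
  simp

lemma e_eq_of_sub_eq_intCast {x y : ℂ} {n : ℤ} (h : x - y = n) : e x = e y := by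
  rw [show x = y + n by rw [← h]; ring, e_add, e_intCast, mul_one]

lemma e_intCast_add_half (n : ℤ) : e (n + 1 / 2) = -1 := by
  rw [e_add, e_intCast, e_half, one_mul]

lemma qpow_add_one (τ : ℂ) (a : ℝ) : qpow (τ + 1) a = e a * qpow τ a := by
  rw [qpow, qpow, e, ← Complex.exp_add]; ring_nf

lemma qpow_add_one_intCast (τ : ℂ) (n : ℤ) : qpow (τ + 1) n = qpow τ n := by
  rw [qpow_add_one, Complex.ofReal_intCast, e_intCast, one_mul]

/-- The difference `M j² + k j - (M + k) j = M j (j - 1)` is an integer when `2M` is. -/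
lemma e_quadratic {M : ℝ} {n : ℤ} (hn : 2 * M = n) (k : ℝ) (j : ℤ) :
    e (M * j ^ 2 + k * j) = e ((M : ℂ) + k) ^ j := by
  obtain ⟨v, hv⟩ := Int.even_mul_pred_self j
  have hMc : 2 * (M : ℂ) = n := by exact_mod_cast hn
  have hvc : (j : ℂ) * (j - 1) = v + v := by exact_mod_cast hv
  rw [← e_intCast_mul, e_eq_of_sub_eq_intCast (n := n * v)]
  push_cast
  linear_combination (M : ℂ) * hvc + v * hMc

lemma theta_add_one {M : ℝ} (hM : M ≠ 0) {n : ℤ} (hn : 2 * M = n) (ε : ℂ) (k : ℝ) (τ z : ℂ) :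
    theta ε k M (τ + 1) z = e ((k : ℂ) ^ 2 / (4 * M)) * theta (ε * e ((M : ℂ) + k)) k M τ z := by
  rw [theta, theta, ← tsum_mul_left]
  refine tsum_congr fun j => ?_
  have hsq : ((M * ((j : ℝ) + k / (2 * M)) ^ 2 : ℝ) : ℂ)
      = (M * j ^ 2 + k * j : ℂ) + k ^ 2 / (4 * M) := by
    have : (M : ℂ) ≠ 0 := by exact_mod_cast hM
    push_cast; field_simp; ring
  rw [qpow_add_one, hsq, e_add, e_quadratic hn, mul_zpow]
  ring

lemma theta_add_one_of_add_eq_intCast {M : ℝ} (hM : M ≠ 0) {n : ℤ} (hn : 2 * M = n)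
    {k : ℝ} {l : ℤ} (hl : M + k = l) (ε : ℂ) (τ z : ℂ) :
    theta ε k M (τ + 1) z = e ((k : ℂ) ^ 2 / (4 * M)) * theta ε k M τ z := by
  rw [theta_add_one hM hn, show (M : ℂ) + k = l by exact_mod_cast hl, e_intCast, mul_one]

lemma theta_add_one_of_add_eq_intCast_add_half {M : ℝ} (hM : M ≠ 0) {n : ℤ} (hn : 2 * M = n)
    {k : ℝ} {l : ℤ} (hl : M + k = l + 1 / 2) (ε : ℂ) (τ z : ℂ) :
    theta ε k M (τ + 1) z = e ((k : ℂ) ^ 2 / (4 * M)) * theta (-ε) k M τ z := by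
  rw [theta_add_one hM hn, show (M : ℂ) + k = l + 1 / 2 by
    simpa using congrArg ((↑) : ℝ → ℂ) hl,
    e_intCast_add_half, mul_neg_one]

lemma exp_add_e (X c : ℂ) :
    Complex.exp (X + 2 * Real.pi * Complex.I * c) = Complex.exp X * e c :=
  Complex.exp_add _ _

lemma qpow_add_one_quadratic {m s : ℝ} {n l : ℤ} (hn : 2 * m = n) (hl : m + s = l)
    (τ : ℂ) (j : ℤ) : qpow (τ + 1) (m * j ^ 2 + s * j) = qpow τ (m * j ^ 2 + s * j) := by
  rw [qpow_add_one]
  push_cast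
  rw [e_quadratic hn, show (m : ℂ) + s = l by exact_mod_cast hl, e_intCast, one_zpow, one_mul]

section Phi

variable {m s : ℝ} {n l : ℤ}

lemma Phi1_add_one (hn : 2 * m = n) (hl : m + s = l) (ε τ z₁ z₂ t : ℂ) :
    Phi1 ε m s (τ + 1) z₁ z₂ t = Phi1 ε m s τ z₁ z₂ t := by
  simp only [Phi1, qpow_add_one_quadratic hn hl, qpow_add_one_intCast]

lemma Phi2_add_one (hn : 2 * m = n) (hl : m + s = l) (ε τ z₁ z₂ t : ℂ) :
    Phi2 ε m s (τ + 1) z₁ z₂ t = Phi2 ε m s τ z₁ z₂ t := by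
  simp only [Phi2, qpow_add_one_quadratic hn hl, qpow_add_one_intCast]

lemma Rfun_add_one (hm : m ≠ 0) (hn : 2 * m = n) {j : ℝ} (hl : m + j = l) (ε τ w : ℂ) :
    Rfun ε j m (τ + 1) w = e (-((j : ℂ) ^ 2 / (4 * m))) * Rfun ε j m τ w := by
  have hmc : (m : ℂ) ≠ 0 := by exact_mod_cast hm
  rw [Rfun, Rfun, ← tsum_mul_left]
  refine tsum_congr fun k => ?_
  have hexp : -(Real.pi : ℂ) * Complex.I * (τ + 1) * ((j : ℂ) + 2 * m * k) ^ 2 / (2 * m)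
        + 2 * Real.pi * Complex.I * ((j : ℂ) + 2 * m * k) * w
      = (-(Real.pi : ℂ) * Complex.I * τ * ((j : ℂ) + 2 * m * k) ^ 2 / (2 * m)
        + 2 * Real.pi * Complex.I * ((j : ℂ) + 2 * m * k) * w)
        + 2 * Real.pi * Complex.I * (-((j : ℂ) ^ 2 / (4 * m)) + -(m * k ^ 2 + j * k)) := by
    field_simp; ring
  have hchar : e (-((m : ℂ) * k ^ 2 + j * k)) = 1 := by
    rw [e_neg, e_quadratic hn, show (m : ℂ) + j = l by exact_mod_cast hl, e_intCast, one_zpow,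
      inv_one]
  rw [Complex.add_im, Complex.one_im, add_zero, hexp, exp_add_e, e_add, hchar]
  ring

lemma Rfun_add_one_right (hn : 2 * m = n) (ε : ℂ) (j : ℝ) (τ w : ℂ) :
    Rfun ε j m τ (w + 1) = e j * Rfun ε j m τ w := by
  have hnc : 2 * (m : ℂ) = n := by exact_mod_cast hn
  rw [Rfun, Rfun, ← tsum_mul_left]
  refine tsum_congr fun k => ?_
  have hexp : -(Real.pi : ℂ) * Complex.I * τ * ((j : ℂ) + 2 * m * k) ^ 2 / (2 * m)
        + 2 * Real.pi * Complex.I * ((j : ℂ) + 2 * m * k) * (w + 1)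
      = (-(Real.pi : ℂ) * Complex.I * τ * ((j : ℂ) + 2 * m * k) ^ 2 / (2 * m)
        + 2 * Real.pi * Complex.I * ((j : ℂ) + 2 * m * k) * w)
        + 2 * Real.pi * Complex.I * (j + (n * k : ℤ)) := by
    push_cast; rw [← hnc]; ring
  rw [Complex.add_im, Complex.one_im, add_zero, hexp, exp_add_e, e_add, e_intCast]
  ring

lemma PhiAdd_add_one (hm : m ≠ 0) (hn : 2 * m = n) (hl : m + s = l) (ε τ z₁ z₂ t : ℂ) :
    PhiAdd ε m s (τ + 1) z₁ z₂ t = PhiAdd ε m s τ z₁ z₂ t := by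
  rw [PhiAdd, PhiAdd]
  congr 1
  refine tsum_congr fun r => ?_
  split_ifs
  · have hpos : m + (s + r) = (l + r : ℤ) := by push_cast; linarith
    have hneg : m + -(s + r) = (n - l - r : ℤ) := by push_cast; linarith
    have hcancel :
        e (-(((s + r : ℝ) : ℂ) ^ 2 / (4 * m))) * e (((s + r : ℝ) : ℂ) ^ 2 / (4 * m)) = 1 := by
      rw [e_neg, inv_mul_cancel₀ (e_ne_zero _)]
    rw [Rfun_add_one hm hn hpos, theta_add_one_of_add_eq_intCast hm hn hpos,
      theta_add_one_of_add_eq_intCast hm hn hneg, Complex.ofReal_neg, neg_sq]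
    linear_combination (Rfun ε (s + r) m τ ((z₁ - z₂) / 2) *
      (theta ε (s + r) m τ (z₁ + z₂) - theta ε (-(s + r)) m τ (z₁ + z₂))) * hcancel
  · rfl

lemma PhiTilde_add_one (hm : m ≠ 0) (hn : 2 * m = n) (hl : m + s = l) (ε τ z₁ z₂ t : ℂ) :
    PhiTilde ε m s (τ + 1) z₁ z₂ t = PhiTilde ε m s τ z₁ z₂ t := by
  rw [PhiTilde, PhiTilde, Phi, Phi, Phi1_add_one hn hl, Phi2_add_one hn hl,
    PhiAdd_add_one hm hn hl]

lemma Phi1_shift (ε τ z₁ z₂ t : ℂ) :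
    Phi1 ε m s τ (z₁ + 1) (z₂ - 1) t = e s * Phi1 ε m s τ z₁ z₂ t := by
  rw [Phi1, Phi1, mul_left_comm]
  congr 1
  rw [← tsum_mul_left]
  refine tsum_congr fun j => ?_
  rw [show (m : ℂ) * j * (z₁ + 1 + (z₂ - 1)) + s * (z₁ + 1)
      = ((m : ℂ) * j * (z₁ + z₂) + s * z₁) + s by ring, e_add, e_add z₁ 1, e_one, mul_one]
  ring

lemma Phi2_shift (ε τ z₁ z₂ t : ℂ) :
    Phi2 ε m s τ (z₁ + 1) (z₂ - 1) t = e s * Phi2 ε m s τ z₁ z₂ t := by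
  rw [Phi2, Phi2, mul_left_comm]
  congr 1
  rw [← tsum_mul_left]
  refine tsum_congr fun j => ?_
  rw [show -(m : ℂ) * j * (z₁ + 1 + (z₂ - 1)) - s * (z₂ - 1)
      = (-(m : ℂ) * j * (z₁ + z₂) - s * z₂) + s by ring, e_add, show -(z₂ - 1) = -z₂ + 1 by ring,
    e_add (-z₂) 1, e_one, mul_one]
  ring

lemma PhiAdd_shift (hn : 2 * m = n) (ε τ z₁ z₂ t : ℂ) :
    PhiAdd ε m s τ (z₁ + 1) (z₂ - 1) t = e s * PhiAdd ε m s τ z₁ z₂ t := by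
  rw [PhiAdd, PhiAdd, mul_left_comm]
  congr 1
  rw [← tsum_mul_left]
  refine tsum_congr fun r => ?_
  split_ifs
  · rw [show (z₁ + 1 - (z₂ - 1)) / 2 = (z₁ - z₂) / 2 + 1 by ring,
      show z₁ + 1 + (z₂ - 1) = z₁ + z₂ by ring, Rfun_add_one_right hn]
    push_cast
    rw [e_add, e_intCast]
    ring
  · exact (mul_zero _).symm

lemma PhiTilde_shift (hn : 2 * m = n) (ε τ z₁ z₂ t : ℂ) :
    PhiTilde ε m s τ (z₁ + 1) (z₂ - 1) t = e s * PhiTilde ε m s τ z₁ z₂ t := by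
  rw [PhiTilde, PhiTilde, Phi, Phi, Phi1_shift, Phi2_shift, PhiAdd_shift hn]
  ring

end Phi

lemma eta_add_one (τ : ℂ) : eta (τ + 1) = e (1 / 24) * eta τ := by
  have hprod : ∀ k : ℕ, qpow (τ + 1) ((k : ℝ) + 1) = qpow τ ((k : ℝ) + 1) := fun k => by
    simpa using qpow_add_one_intCast τ (k + 1)
  rw [eta, eta, qpow_add_one, tprod_congr fun k => congrArg (1 - ·) (hprod k)]
  push_cast
  ring

lemma e_neg_quarter : e (-(1 / 4)) = -Complex.I := by
  rw [e_neg, e_quarter, Complex.inv_I]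

lemma e_one_div_24_pow_three : e (1 / 24) ^ 3 = e (1 / 8) := by
  rw [show (1 / 8 : ℂ) = 1 / 24 + 1 / 24 + 1 / 24 by norm_num, e_add, e_add]
  ring

lemma eta_pow_three_add_one (τ : ℂ) : eta (τ + 1) ^ 3 = e (1 / 8) * eta τ ^ 3 := by
  rw [eta_add_one, mul_pow, e_one_div_24_pow_three]

lemma Ups12_phase {m : ℝ} (hm : 2 * m + 1 ≠ 0) (p : ℤ) :
    -Complex.I * e (1 / 8) * e (((p : ℂ) + 1 / 2) ^ 2 / (4 * (m + 1 / 2)))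
      = Complex.exp ((Real.pi : ℂ) * Complex.I * (2 * (p : ℂ) + 1) ^ 2
          / (4 * (2 * (m : ℂ) + 1)) - (Real.pi : ℂ) * Complex.I / 4) := by
  have hmc : 2 * (m : ℂ) + 1 ≠ 0 := by exact_mod_cast hm
  rw [← e_neg_quarter, ← e_add, ← e_add, e]
  congr 1
  field_simp
  ring

lemma Ups3_phase {m : ℝ} (hm : 2 * m + 1 ≠ 0) (p : ℤ) :
    e ((p : ℂ) ^ 2 / (4 * (m + 1 / 2)))
      = Complex.exp ((Real.pi : ℂ) * Complex.I * (p : ℂ) ^ 2 / (2 * (m : ℂ) + 1)) := by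
  have hmc : 2 * (m : ℂ) + 1 ≠ 0 := by exact_mod_cast hm
  rw [e]
  congr 1
  field_simp
  ring

section HalfOddLevel

variable {m : ℝ} {u : ℕ}

lemma PhiTilde_half_add_one (hm : m = u + 1 / 2) (ε τ z₁ z₂ t : ℂ) :
    PhiTilde ε m (1 / 2) (τ + 1) z₁ z₂ t = PhiTilde ε m (1 / 2) τ z₁ z₂ t :=
  PhiTilde_add_one (n := 2 * u + 1) (l := u + 1) (by rw [hm]; positivity)
    (by rw [hm]; push_cast; ring) (by rw [hm]; push_cast; ring) ε τ z₁ z₂ t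

lemma PhiTilde_half_shift (hm : m = u + 1 / 2) (ε τ z₁ z₂ t : ℂ) :
    PhiTilde ε m (1 / 2) τ (z₁ + 1) (z₂ - 1) t = -PhiTilde ε m (1 / 2) τ z₁ z₂ t := by
  rw [PhiTilde_shift (n := 2 * u + 1) (by rw [hm]; push_cast; ring)]
  push_cast
  rw [e_half, neg_one_mul]

lemma psi1_add_one (hm : m = u + 1 / 2) (τ z : ℂ) : psi1 m (τ + 1) z = psi2 m τ z := by
  rw [psi1, psi2, show z / 2 + (τ + 1) / 2 - 1 / 2 = z / 2 + τ / 2 by ring,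
    show z / 2 - (τ + 1) / 2 + 1 / 2 = z / 2 - τ / 2 by ring, PhiTilde_half_add_one hm]

lemma psi2_add_one (hm : m = u + 1 / 2) (τ z : ℂ) : psi2 m (τ + 1) z = -psi1 m τ z := by
  rw [psi1, psi2, show z / 2 + (τ + 1) / 2 = (z / 2 + τ / 2 - 1 / 2) + 1 by ring,
    show z / 2 - (τ + 1) / 2 = (z / 2 - τ / 2 + 1 / 2) - 1 by ring, PhiTilde_half_add_one hm,
    PhiTilde_half_shift hm]

lemma psi3_add_one (hm : m = u + 1 / 2) (τ z : ℂ) : psi3 m (τ + 1) z = psi3 m τ z := by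
  rw [psi3, psi3, PhiTilde_half_add_one hm]

lemma Xi12_phase (hm : m = u + 1 / 2) (p : ℤ) :
    e (-(m : ℂ) / 4) * e (((2 * p + 1) * m : ℂ) ^ 2 / (4 * (m + 1 / 2)))
      = Complex.exp ((Real.pi : ℂ) * Complex.I * (2 * (p : ℂ) + 1) ^ 2 / (4 * (2 * (m : ℂ) + 1))
          - (Real.pi : ℂ) * Complex.I / 4) := by
  have hmc : (m : ℂ) = u + 1 / 2 := by rw [hm]; push_cast; ring
  have hM : (m : ℂ) + 1 / 2 = u + 1 := by rw [hmc]; ring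
  have h2M : 2 * (m : ℂ) + 1 = 2 * (u + 1) := by rw [hmc]; ring
  have hu : (u : ℂ) + 1 ≠ 0 := by exact_mod_cast Nat.succ_ne_zero u
  rw [← e_add, e_eq_of_sub_eq_intCast (y := (2 * p + 1) ^ 2 / (8 * (2 * m + 1)) - 1 / 8)
    (n := u * p * (p + 1)), e]
  · congr 1; rw [h2M]; field_simp; ring
  · push_cast; rw [hM, h2M, hmc]; field_simp; ring

lemma Xi1_add_one (hm : m = u + 1 / 2) (p : ℤ) (τ z : ℂ) :
    Xi1 m p (τ + 1) z
      = Complex.exp ((Real.pi : ℂ) * Complex.I * (2 * (p : ℂ) + 1) ^ 2 / (4 * (2 * (m : ℂ) + 1))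
          - (Real.pi : ℂ) * Complex.I / 4) * Xi2 m p τ z := by
  have hM : m + 1 / 2 ≠ 0 := by rw [hm]; positivity
  rw [Xi1, Xi2, qpow_add_one, psi1_add_one hm, theta_add_one_of_add_eq_intCast_add_half hM
    (n := 2 * u + 2) (l := u + 1 + (2 * p + 1) * u + p) (by rw [hm]; push_cast; ring)
    (by rw [hm]; push_cast; ring), neg_neg, ← Xi12_phase hm]
  push_cast
  ring

lemma Xi2_add_one (hm : m = u + 1 / 2) (p : ℤ) (τ z : ℂ) :
    Xi2 m p (τ + 1) z
      = -Complex.exp ((Real.pi : ℂ) * Complex.I * (2 * (p : ℂ) + 1) ^ 2 / (4 * (2 * (m : ℂ) + 1))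
          - (Real.pi : ℂ) * Complex.I / 4) * Xi1 m p τ z := by
  have hM : m + 1 / 2 ≠ 0 := by rw [hm]; positivity
  rw [Xi1, Xi2, qpow_add_one, psi2_add_one hm, theta_add_one_of_add_eq_intCast_add_half hM
    (n := 2 * u + 2) (l := u + 1 + (2 * p + 1) * u + p) (by rw [hm]; push_cast; ring)
    (by rw [hm]; push_cast; ring), ← Xi12_phase hm]
  push_cast
  ring

lemma Xi3_phase (hm : m = u + 1 / 2) (p : ℤ) :
    e ((2 * p * m : ℂ) ^ 2 / (4 * (m + 1 / 2)))
      = Complex.exp ((Real.pi : ℂ) * Complex.I * (p : ℂ) ^ 2 / (2 * (m : ℂ) + 1)) := by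
  have hmc : (m : ℂ) = u + 1 / 2 := by rw [hm]; push_cast; ring
  have hM : (m : ℂ) + 1 / 2 = u + 1 := by rw [hmc]; ring
  have h2M : 2 * (m : ℂ) + 1 = 2 * (u + 1) := by rw [hmc]; ring
  have hu : (u : ℂ) + 1 ≠ 0 := by exact_mod_cast Nat.succ_ne_zero u
  rw [e_eq_of_sub_eq_intCast (y := p ^ 2 / (2 * (2 * m + 1))) (n := u * p ^ 2), e]
  · congr 1; rw [h2M]; field_simp
  · push_cast; rw [hM, h2M, hmc]; field_simp; ring

lemma Xi3_add_one (hm : m = u + 1 / 2) (p : ℤ) (τ z : ℂ) :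
    Xi3 m p (τ + 1) z
      = Complex.exp ((Real.pi : ℂ) * Complex.I * (p : ℂ) ^ 2 / (2 * (m : ℂ) + 1))
        * Xi3 m p τ z := by
  have hM : m + 1 / 2 ≠ 0 := by rw [hm]; positivity
  rw [Xi3, Xi3, psi3_add_one hm, theta_add_one_of_add_eq_intCast hM
    (n := 2 * u + 2) (l := u + 1 + p * (2 * u + 1)) (by rw [hm]; push_cast; ring)
    (by rw [hm]; push_cast; ring), ← Xi3_phase hm]
  push_cast
  ring

lemma Ups1_add_one (hm : m = u + 1 / 2) (p : ℤ) (τ z : ℂ) :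
    Ups1 m p (τ + 1) z
      = Complex.exp ((Real.pi : ℂ) * Complex.I * (2 * (p : ℂ) + 1) ^ 2 / (4 * (2 * (m : ℂ) + 1))
          - (Real.pi : ℂ) * Complex.I / 4) * Ups2 m p τ z := by
  have hM : m + 1 / 2 ≠ 0 := by rw [hm]; positivity
  have h2M : 2 * (m + 1 / 2) = (2 * u + 2 : ℤ) := by rw [hm]; push_cast; ring
  rw [Ups1, Ups2, eta_pow_three_add_one,
    theta_add_one_of_add_eq_intCast_add_half hM h2M (l := u + 1 + p) (by rw [hm]; push_cast; ring),
    theta_add_one_of_add_eq_intCast_add_half hM h2M (l := u - p) (by rw [hm]; push_cast; ring),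
    theta_add_one_of_add_eq_intCast_add_half (by norm_num) (n := 1) (l := 0) (by norm_num)
      (by norm_num)]
  push_cast
  rw [neg_neg, neg_sq, zero_pow two_ne_zero, zero_div, e_zero, one_mul,
    ← Ups12_phase (by rw [hm]; positivity)]
  ring

lemma Ups2_add_one (hm : m = u + 1 / 2) (p : ℤ) (τ z : ℂ) :
    Ups2 m p (τ + 1) z
      = -Complex.exp ((Real.pi : ℂ) * Complex.I * (2 * (p : ℂ) + 1) ^ 2 / (4 * (2 * (m : ℂ) + 1))
          - (Real.pi : ℂ) * Complex.I / 4) * Ups1 m p τ z := by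
  have hM : m + 1 / 2 ≠ 0 := by rw [hm]; positivity
  have h2M : 2 * (m + 1 / 2) = (2 * u + 2 : ℤ) := by rw [hm]; push_cast; ring
  rw [Ups1, Ups2, eta_pow_three_add_one,
    theta_add_one_of_add_eq_intCast_add_half hM h2M (l := u + 1 + p) (by rw [hm]; push_cast; ring),
    theta_add_one_of_add_eq_intCast_add_half hM h2M (l := u - p) (by rw [hm]; push_cast; ring),
    theta_add_one_of_add_eq_intCast_add_half (by norm_num) (n := 1) (l := 0) (by norm_num)
      (by norm_num)]
  push_cast
  rw [neg_sq, zero_pow two_ne_zero, zero_div, e_zero, one_mul,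
    ← Ups12_phase (by rw [hm]; positivity)]
  ring_nf
  rw [Complex.I_sq]
  ring

lemma Ups3_add_one (hm : m = u + 1 / 2) (p : ℤ) (τ z : ℂ) :
    Ups3 m p (τ + 1) z
      = Complex.exp ((Real.pi : ℂ) * Complex.I * (p : ℂ) ^ 2 / (2 * (m : ℂ) + 1))
        * Ups3 m p τ z := by
  have hM : m + 1 / 2 ≠ 0 := by rw [hm]; positivity
  have h2M : 2 * (m + 1 / 2) = (2 * u + 2 : ℤ) := by rw [hm]; push_cast; ring
  rw [Ups3, Ups3, eta_pow_three_add_one,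
    theta_add_one_of_add_eq_intCast hM h2M (l := u + 1 + p) (by rw [hm]; push_cast; ring),
    theta_add_one_of_add_eq_intCast hM h2M (l := u + 1 - p) (by rw [hm]; push_cast; ring),
    theta_add_one_of_add_eq_intCast (by norm_num) (n := 1) (l := 1) (by norm_num) (by norm_num)]
  push_cast
  rw [neg_sq, Ups3_phase (by rw [hm]; positivity),
    show (1 / 2 : ℂ) ^ 2 / (4 * (1 / 2)) = 1 / 8 by norm_num]
  field_simp [e_ne_zero]

end HalfOddLevel

theorem statement14_general (N : ℕ) (hN : Odd N) (m : ℝ) (hm : m = (N : ℝ) / 2)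
    (p : ℤ)
    (τ : ℂ) (z : ℂ) :
    Xi1 m p (τ + 1) z
        = Complex.exp ((Real.pi : ℂ) * Complex.I * (2 * (p : ℂ) + 1) ^ 2 / (4 * (2 * (m : ℂ) + 1))
            - (Real.pi : ℂ) * Complex.I / 4) * Xi2 m p τ z ∧
    Xi2 m p (τ + 1) z
        = -Complex.exp ((Real.pi : ℂ) * Complex.I * (2 * (p : ℂ) + 1) ^ 2 / (4 * (2 * (m : ℂ) + 1))
            - (Real.pi : ℂ) * Complex.I / 4) * Xi1 m p τ z ∧
    Xi3 m p (τ + 1) z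
        = Complex.exp ((Real.pi : ℂ) * Complex.I * (p : ℂ) ^ 2 / (2 * (m : ℂ) + 1)) * Xi3 m p τ z ∧
    Ups1 m p (τ + 1) z
        = Complex.exp ((Real.pi : ℂ) * Complex.I * (2 * (p : ℂ) + 1) ^ 2 / (4 * (2 * (m : ℂ) + 1))
            - (Real.pi : ℂ) * Complex.I / 4) * Ups2 m p τ z ∧
    Ups2 m p (τ + 1) z
        = -Complex.exp ((Real.pi : ℂ) * Complex.I * (2 * (p : ℂ) + 1) ^ 2 / (4 * (2 * (m : ℂ) + 1))
            - (Real.pi : ℂ) * Complex.I / 4) * Ups1 m p τ z ∧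
    Ups3 m p (τ + 1) z
        = Complex.exp ((Real.pi : ℂ) * Complex.I * (p : ℂ) ^ 2 / (2 * (m : ℂ) + 1)) * Ups3 m p τ z := by
  obtain ⟨u, rfl⟩ := hN
  have hmu : m = u + 1 / 2 := by rw [hm]; push_cast; ring
  exact ⟨Xi1_add_one hmu p τ z, Xi2_add_one hmu p τ z, Xi3_add_one hmu p τ z,
    Ups1_add_one hmu p τ z, Ups2_add_one hmu p τ z, Ups3_add_one hmu p τ z⟩

theorem statement14 (N : ℕ) (hN : Odd N) (m : ℝ) (hm : m = (N : ℝ) / 2)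
    (p : ℤ) (hp : 0 ≤ p ∧ (p : ℝ) ≤ 2 * m)
    (τ : ℂ) (hτ : 0 < τ.im) (z : ℂ)
    (hz : ∀ a b : ℤ, z ≠ (a : ℂ) * τ + (b : ℂ)) :
    Xi1 m p (τ + 1) z
        = Complex.exp ((Real.pi : ℂ) * Complex.I * (2 * (p : ℂ) + 1) ^ 2 / (4 * (2 * (m : ℂ) + 1))
            - (Real.pi : ℂ) * Complex.I / 4) * Xi2 m p τ z ∧
    Xi2 m p (τ + 1) z
        = -Complex.exp ((Real.pi : ℂ) * Complex.I * (2 * (p : ℂ) + 1) ^ 2 / (4 * (2 * (m : ℂ) + 1))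
            - (Real.pi : ℂ) * Complex.I / 4) * Xi1 m p τ z ∧
    Xi3 m p (τ + 1) z
        = Complex.exp ((Real.pi : ℂ) * Complex.I * (p : ℂ) ^ 2 / (2 * (m : ℂ) + 1)) * Xi3 m p τ z ∧
    Ups1 m p (τ + 1) z
        = Complex.exp ((Real.pi : ℂ) * Complex.I * (2 * (p : ℂ) + 1) ^ 2 / (4 * (2 * (m : ℂ) + 1))
            - (Real.pi : ℂ) * Complex.I / 4) * Ups2 m p τ z ∧
    Ups2 m p (τ + 1) z
        = -Complex.exp ((Real.pi : ℂ) * Complex.I * (2 * (p : ℂ) + 1) ^ 2 / (4 * (2 * (m : ℂ) + 1))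
            - (Real.pi : ℂ) * Complex.I / 4) * Ups1 m p τ z ∧
    Ups3 m p (τ + 1) z
        = Complex.exp ((Real.pi : ℂ) * Complex.I * (p : ℂ) ^ 2 / (2 * (m : ℂ) + 1)) * Ups3 m p τ z :=
  statement14_general N hN m hm p τ z

end Mock
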